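/- Let n, N ≥ 1 and b ≥ 2 be integers with nN = b^n, and let B be the set of integers a with 0 ≤ a < 2nN such that at least one of the n least significant digits of a in base b equals 0. Then the (−N,N)-linear graph on B is (n,(−N,N))-universal, and |B| = 2(b^n − (b−1)^n), which is at most 2n·b^{n−1}. In particular there exists an (n,(−N,N))-universal graph of size 2(nN − ((nN)^{1/n} − 1)^n) ≤ 2n(nN)^{1−1/n}. -/

import Mathlib

open Filter


/-- A finite path: a list of consecutive edges, all belonging to `E`,
starting at `u` (when nonempty). -/
def FinPath {V : Type} (E : Set (V × ℤ × V)) (u : V) (p : List (V × ℤ × V)) : Prop :=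
  (∀ e ∈ p, e ∈ E) ∧ List.Chain' (fun e e' => e.2.2 = e'.1) p ∧
    ∀ h : p ≠ [], (p.head h).1 = u

/-- The last vertex of a finite path starting at `u` (which is `u` itself for the empty path). -/
def lastV {V : Type} (u : V) (p : List (V × ℤ × V)) : V :=
  (p.getLastD (u, 0, u)).2.2

/-- An infinite path: a sequence of consecutive edges, all belonging to `E`. -/
def InfPath {V : Type} (E : Set (V × ℤ × V)) (π : ℕ → V × ℤ × V) : Prop :=
  (∀ i, π i ∈ E) ∧ ∀ i, (π i).2.2 = (π (i + 1)).1

/-- The total weight of a finite path. -/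
def pathWeight {V : Type} (p : List (V × ℤ × V)) : ℤ :=
  (p.map fun e => e.2.1).sum

/-- A sequence of integer weights satisfies mean payoff if the liminf of the
averages of its prefixes is nonnegative. -/
def MeanPayoffSeq (w : ℕ → ℤ) : Prop :=
  0 ≤ Filter.atTop.liminf (fun ℓ : ℕ => (∑ i ∈ Finset.range ℓ, (w i : ℝ)) / (ℓ : ℝ))

/-- A graph (given by its edge set) satisfies mean payoff if all its infinite paths do. -/
def SatMP {V : Type} (E : Set (V × ℤ × V)) : Prop :=
  ∀ π : ℕ → V × ℤ × V, InfPath E π → MeanPayoffSeq (fun i => (π i).2.1)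

/-- A cycle: a nonempty finite path whose first and last vertices coincide. -/
def IsCycle {V : Type} (E : Set (V × ℤ × V)) (p : List (V × ℤ × V)) : Prop :=
  p ≠ [] ∧ ∃ v, FinPath E v p ∧ lastV v p = v

/-- A `W`-graph: a finite set of vertices, edges labelled by weights in `W`,
and an initial vertex from which every vertex is reachable. -/
structure WGraph (W : Finset ℤ) where
  V : Type
  fin : Fintype V
  E : Set (V × ℤ × V)
  init : V
  wt : ∀ e ∈ E, e.2.1 ∈ W
  reach : ∀ v : V, ∃ p, FinPath E init p ∧ lastV init p = v

attribute [instance] WGraph.fin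

/-- The `W`-linear graph on a set `A ⊆ ℤ`: vertices are the elements of `A`, and
for `v, v' ∈ A` and `w ∈ W` there is an edge `(v, w, v')` whenever `v' - v ≤ w`. -/
def LinE (W : Finset ℤ) (A : Set ℤ) : Set (ℤ × ℤ × ℤ) :=
  {e | e.1 ∈ A ∧ e.2.2 ∈ A ∧ e.2.1 ∈ W ∧ e.2.2 - e.1 ≤ e.2.1}

/-- A homomorphism of labelled graphs (no requirement on initial vertices). -/
def IsHom {V U : Type} (E : Set (V × ℤ × V)) (E' : Set (U × ℤ × U)) (φ : V → U) : Prop :=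
  ∀ e ∈ E, (φ e.1, e.2.1, φ e.2.2) ∈ E'

/-- A graph (given by its edge set) is `(n,W)`-universal if it satisfies mean payoff and
every `(n,W)`-graph satisfying mean payoff admits a homomorphism into it. -/
def Universal (n : ℕ) (W : Finset ℤ) {U : Type} (EU : Set (U × ℤ × U)) : Prop :=
  SatMP EU ∧
    ∀ G : WGraph W, Fintype.card G.V ≤ n → SatMP G.E → ∃ φ : G.V → U, IsHom G.E EU φ

/-- The set of weights `(-N, N)`: integers `w` with `-N < w < N`. -/
noncomputable def Wball (N : ℕ) : Finset ℤ := Finset.Ioo (-(N : ℤ)) (N : ℤ)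

/-- `φ` is the distance function from the initial vertex: `φ v` is the minimum total
weight of a finite path from the initial vertex to `v`. -/
def IsDistFrom {W : Finset ℤ} (G : WGraph W) (φ : G.V → ℤ) : Prop :=
  ∀ v : G.V,
    (∃ p, FinPath G.E G.init p ∧ lastV G.init p = v ∧ pathWeight p = φ v) ∧
    ∀ p, FinPath G.E G.init p → lastV G.init p = v → φ v ≤ pathWeight p

/-- The set `B` of integers `a` with `0 ≤ a < 2nN` having at least one zero digit
among the `n` least significant digits of `a` in base `b`. -/
def digitZeroSet (n N b : ℕ) : Set ℤ :=
  {a | 0 ≤ a ∧ a < 2 * (n : ℤ) * (N : ℤ) ∧ ∃ i < n, (a / (b : ℤ) ^ i) % (b : ℤ) = 0}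

/-!
A mean-payoff graph with weights in `(-N, N)` has no negative closed walk, so cutting out
repeated vertices shows that every walk weighs at least `-(n - 1)(N - 1)`. The least weight
`d v` of a walk ending at `v` is then a potential (`d v' ≤ d v + w` along every edge) with values
in `[-(n - 1)(N - 1), 0]`. Shifted to `[0, (n - 1)(N - 1)]`, it takes at most `n` values, and one
translation by some `c < bⁿ = nN`, chosen one digit at a time, gives each of them a zero among its
`n` lowest base-`b` digits. The translated potential is a homomorphism into the linear graph on
`B`, which satisfies mean payoff because path weights telescope on a bounded set. For the count,
`[0, bⁿ)` is in bijection with the digit vectors `Fin n → Fin b`, of which `(b - 1)ⁿ` avoid `0`.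
-/

open Finset Topology

def HasZeroDigit (b k a : ℕ) : Prop := ∃ i < k, a / b ^ i % b = 0

instance (b k : ℕ) : DecidablePred (HasZeroDigit b k) :=
  fun _ => inferInstanceAs (Decidable (∃ i < k, _))

theorem hasZeroDigit_succ_iff {b k a : ℕ} :
    HasZeroDigit b (k + 1) a ↔ a % b = 0 ∨ HasZeroDigit b k (a / b) := by
  simp only [HasZeroDigit, Nat.exists_lt_succ_left, pow_zero, Nat.div_one, pow_succ',
    Nat.div_div_eq_div_mul]

theorem hasZeroDigit_mod_pow_iff {b k a : ℕ} :
    HasZeroDigit b k (a % b ^ k) ↔ HasZeroDigit b k a := by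
  unfold HasZeroDigit
  refine exists_congr fun i => and_congr_right fun hi => ?_
  rw [← Nat.mod_mul_right_div_self, ← Nat.mod_mul_right_div_self a, ← pow_succ,
    Nat.mod_mod_of_dvd _ (pow_dvd_pow b hi)]

theorem exists_add_hasZeroDigit {b : ℕ} (hb : 0 < b) (k : ℕ) (s : Finset ℕ) (hs : s.card ≤ k) :
    ∃ c < b ^ k, ∀ a ∈ s, HasZeroDigit b k (a + c) := by
  induction k generalizing s with
  | zero => exact ⟨0, one_pos, by simp_all⟩
  | succ k ih =>
    obtain rfl | ⟨a₀, ha₀⟩ := s.eq_empty_or_nonempty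
    · exact ⟨0, by positivity, by simp⟩
    -- `c₀` clears the last digit of `a₀`; the other elements, shifted one digit to the right,
    -- are handled by the induction hypothesis and `c₀ + b * c` combines both.
    set c₀ := (b - a₀ % b) % b
    have hc₀ : (a₀ + c₀) % b = 0 := by
      have : a₀ + (b - a₀ % b) = b * (a₀ / b + 1) := by
        have := Nat.mod_add_div a₀ b
        have := Nat.mod_lt a₀ hb
        rw [mul_add_one]; omega
      rw [Nat.add_mod_mod, this, Nat.mul_mod_right]
    obtain ⟨c, hc, hdig⟩ := ih ((s.erase a₀).image fun a => (a + c₀) / b)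
      (card_image_le.trans (by rw [card_erase_of_mem ha₀]; omega))
    refine ⟨c₀ + b * c, ?_, fun a ha => ?_⟩
    · calc c₀ + b * c < b + b * c := by have := Nat.mod_lt (b - a₀ % b) hb; omega
        _ = b * (c + 1) := by ring
        _ ≤ b * b ^ k := Nat.mul_le_mul_left b hc
        _ = b ^ (k + 1) := (pow_succ' b k).symm
    rw [hasZeroDigit_succ_iff, ← add_assoc, Nat.add_mul_mod_self_left, Nat.add_mul_div_left _ _ hb]
    obtain rfl | hne := eq_or_ne a a₀
    · exact Or.inl hc₀
    · exact Or.inr (hdig _ (mem_image_of_mem _ (mem_erase.2 ⟨hne, ha⟩)))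

theorem card_fin_fun_val_ne_zero (b k : ℕ) :
    Fintype.card {f : Fin k → Fin b // ∀ i, (f i : ℕ) ≠ 0} = (b - 1) ^ k := by
  rw [Fintype.card_congr
    (Equiv.subtypePiEquivPi (β := fun _ => Fin b) (p := fun _ x => (x : ℕ) ≠ 0))]
  rcases b with _ | b <;> simp

def hasZeroDigitEquiv (b k : ℕ) :
    {a // a < b ^ k ∧ HasZeroDigit b k a} ≃ {f : Fin k → Fin b // ¬ ∀ i, (f i : ℕ) ≠ 0} where
  toFun a := ⟨finFunctionFinEquiv.symm ⟨a, a.2.1⟩, by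
    obtain ⟨i, hi, h⟩ := a.2.2
    simpa [finFunctionFinEquiv_symm_apply_val] using ⟨⟨i, hi⟩, h⟩⟩
  invFun f := ⟨finFunctionFinEquiv f.1, (finFunctionFinEquiv f.1).2, by
    obtain ⟨i, h⟩ := not_forall_not.1 f.2
    refine ⟨i, i.2, ?_⟩
    rwa [← finFunctionFinEquiv_symm_apply_val, Equiv.symm_apply_apply]⟩
  left_inv a := by simp
  right_inv f := Subtype.ext (finFunctionFinEquiv.symm_apply_apply f.1)

open scoped Count in
theorem count_hasZeroDigit_pow (b k : ℕ) :
    Nat.count (HasZeroDigit b k) (b ^ k) = b ^ k - (b - 1) ^ k := by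
  rw [Nat.count_eq_card_fintype, Fintype.card_congr (hasZeroDigitEquiv b k),
    Fintype.card_subtype_compl, card_fin_fun_val_ne_zero, Fintype.card_fun, Fintype.card_fin,
    Fintype.card_fin]

theorem count_hasZeroDigit_two_mul_pow (b k : ℕ) :
    Nat.count (HasZeroDigit b k) (2 * b ^ k) = 2 * (b ^ k - (b - 1) ^ k) := by
  have hshift : Nat.count (fun a => HasZeroDigit b k (b ^ k + a)) (b ^ k) =
      Nat.count (HasZeroDigit b k) (b ^ k) := by
    congr 1
    ext a
    rw [← hasZeroDigit_mod_pow_iff, Nat.add_mod_left, hasZeroDigit_mod_pow_iff]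
  rw [two_mul, Nat.count_add, hshift, count_hasZeroDigit_pow, two_mul]

theorem digitZeroSet_eq (n N b : ℕ) :
    digitZeroSet n N b = Nat.cast '' {a : ℕ | a < 2 * n * N ∧ HasZeroDigit b n a} := by
  ext a
  simp only [digitZeroSet, HasZeroDigit, Set.mem_ofPred_eq, Set.mem_image]
  constructor
  · rintro ⟨ha, hlt, i, hi, hdig⟩
    lift a to ℕ using ha
    exact ⟨a, ⟨by exact_mod_cast hlt, i, hi, by exact_mod_cast hdig⟩, rfl⟩
  · rintro ⟨a, ⟨hlt, i, hi, hdig⟩, rfl⟩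
    exact ⟨by positivity, by exact_mod_cast hlt, i, hi, by exact_mod_cast hdig⟩

theorem ncard_digitZeroSet (n N b : ℕ) :
    (digitZeroSet n N b).ncard = Nat.count (HasZeroDigit b n) (2 * n * N) := by
  rw [digitZeroSet_eq, Set.ncard_image_of_injective _ Nat.cast_injective,
    Nat.count_eq_card_filter_range, ← Set.ncard_coe_finset]
  congr 1
  ext a
  simp

theorem pow_sub_pred_pow_le (b n : ℕ) : b ^ n - (b - 1) ^ n ≤ n * b ^ (n - 1) := by
  rcases b with _ | b
  · simp
  calc (b + 1) ^ n - (b + 1 - 1) ^ n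
      = (∑ i ∈ range n, (b + 1) ^ i * b ^ (n - 1 - i)) * (b + 1 - b) := by
        rw [Nat.add_sub_cancel, geom_sum₂_mul_of_ge (Nat.le_succ b)]
    _ ≤ ∑ i ∈ range n, (b + 1) ^ i * (b + 1) ^ (n - 1 - i) := by
        rw [Nat.add_sub_cancel_left, mul_one]
        gcongr
        exact Nat.le_succ b
    _ = n * (b + 1) ^ (n - 1) := geom_sum₂_self _ _

noncomputable def prefixMean (w : ℕ → ℤ) (ℓ : ℕ) : ℝ := (∑ i ∈ range ℓ, (w i : ℝ)) / ℓ

theorem meanPayoffSeq_iff {w : ℕ → ℤ} : MeanPayoffSeq w ↔ 0 ≤ atTop.liminf (prefixMean w) :=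
  Iff.rfl

theorem prefixMean_eq (w : ℕ → ℤ) (ℓ : ℕ) :
    prefixMean w ℓ = ((∑ i ∈ range ℓ, w i : ℤ) : ℝ) / ℓ := by
  rw [prefixMean, Int.cast_sum]

theorem le_prefixMean {w : ℕ → ℤ} {L : ℤ} (h : ∀ i, L ≤ w i) {ℓ : ℕ} (hℓ : 0 < ℓ) :
    (L : ℝ) ≤ prefixMean w ℓ := by
  rw [prefixMean, le_div_iff₀ (by exact_mod_cast hℓ)]
  simpa [mul_comm] using card_nsmul_le_sum (range ℓ) (fun i => (w i : ℝ)) L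
    fun i _ => by exact_mod_cast h i

theorem prefixMean_le {w : ℕ → ℤ} {K : ℤ} (h : ∀ i, w i ≤ K) {ℓ : ℕ} (hℓ : 0 < ℓ) :
    prefixMean w ℓ ≤ K := by
  rw [prefixMean, div_le_iff₀ (by exact_mod_cast hℓ)]
  simpa [mul_comm] using sum_le_card_nsmul (range ℓ) (fun i => (w i : ℝ)) K
    fun i _ => by exact_mod_cast h i

theorem meanPayoffSeq_of_le_sum {w : ℕ → ℤ} {K C : ℤ} (hK : ∀ i, w i ≤ K)
    (hC : ∀ ℓ, C ≤ ∑ i ∈ range ℓ, w i) : MeanPayoffSeq w := by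
  have hlim : Tendsto (fun ℓ : ℕ => (C : ℝ) / ℓ) atTop (𝓝 0) :=
    tendsto_const_div_atTop_nhds_zero_nat _
  have hbdd : IsBoundedUnder (· ≤ ·) atTop (prefixMean w) :=
    isBoundedUnder_of_eventually_le (eventually_atTop.2 ⟨1, fun ℓ hℓ => prefixMean_le hK hℓ⟩)
  rw [meanPayoffSeq_iff, ← hlim.liminf_eq]
  refine liminf_le_liminf (Eventually.of_forall fun ℓ => ?_) hlim.isBoundedUnder_ge
    hbdd.isCoboundedUnder_ge
  rw [prefixMean_eq]
  exact div_le_div_of_nonneg_right (by exact_mod_cast hC ℓ) ℓ.cast_nonneg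

theorem sum_range_nonneg_of_meanPayoffSeq_mod {f : ℕ → ℤ} {m : ℕ} (hm : 0 < m)
    (h : MeanPayoffSeq fun i => f (i % m)) : 0 ≤ ∑ i ∈ range m, f i := by
  set S := ∑ i ∈ range m, f i
  have hsum : ∀ K, ∑ i ∈ range (K * m), f (i % m) = K * S := by
    intro K
    induction K with
    | zero => simp
    | succ K ih =>
      rw [add_one_mul, sum_range_add, ih, Nat.cast_succ, add_one_mul]
      congr 1
      exact sum_congr rfl fun j hj => by
        rw [Nat.mul_comm, Nat.mul_add_mod, Nat.mod_eq_of_lt (mem_range.1 hj)]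
  have hmean : ∀ K, 0 < K → prefixMean (fun i => f (i % m)) (K * m) = S / m := by
    intro K hK
    rw [prefixMean_eq, hsum]
    push_cast
    exact mul_div_mul_left _ _ (by positivity)
  obtain ⟨j, -, hj⟩ := (range m).exists_min_image f (nonempty_range_iff.2 hm.ne')
  have hbdd : IsBoundedUnder (· ≥ ·) atTop (prefixMean fun i => f (i % m)) :=
    isBoundedUnder_of_eventually_ge (eventually_atTop.2
      ⟨1, fun ℓ hℓ => le_prefixMean (fun i => hj _ (mem_range.2 (Nat.mod_lt i hm))) hℓ⟩)
  have hfreq : ∃ᶠ ℓ in atTop, prefixMean (fun i => f (i % m)) ℓ ≤ S / m :=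
    frequently_atTop.2 fun a => ⟨(a + 1) * m, Nat.le_mul_of_pos_right _ hm |>.trans' a.le_succ,
      (hmean _ a.succ_pos).le⟩
  have hS : (0 : ℝ) ≤ S / m := h.trans (liminf_le_of_frequently_le hfreq hbdd)
  rw [le_div_iff₀ (Nat.cast_pos.2 hm), zero_mul] at hS
  exact_mod_cast hS

theorem satMP_linE {W : Finset ℤ} {A : Set ℤ} (hlo : BddBelow A) (hhi : BddAbove A) :
    SatMP (LinE W A) := by
  obtain ⟨lo, hlo⟩ := hlo
  obtain ⟨hi, hhi⟩ := hhi
  obtain ⟨K, hK⟩ := W.bddAbove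
  intro π hπ
  have hedge : ∀ i, (π i).1 ∈ A ∧ (π i).2.1 ∈ W ∧ (π (i + 1)).1 - (π i).1 ≤ (π i).2.1 := by
    intro i
    obtain ⟨hA, -, hW, hle⟩ := hπ.1 i
    exact ⟨hA, hW, hπ.2 i ▸ hle⟩
  refine meanPayoffSeq_of_le_sum (K := K) (C := lo - hi) (fun i => hK (hedge i).2.1) fun ℓ => ?_
  calc lo - hi ≤ (π ℓ).1 - (π 0).1 := sub_le_sub (hlo (hedge ℓ).1) (hhi (hedge 0).1)
    _ = ∑ i ∈ range ℓ, ((π (i + 1)).1 - (π i).1) := (sum_range_sub (fun i => (π i).1) ℓ).symm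
    _ ≤ ∑ i ∈ range ℓ, (π i).2.1 := sum_le_sum fun i _ => (hedge i).2.2

section Walks

variable {V : Type} {E : Set (V × ℤ × V)}

/-- `x` and `w` list the vertices `x 0, …, x k` and the weights `w 0, …, w (k - 1)` of a walk
of length `k` in `E`; their other values are irrelevant. -/
def IsWalk (E : Set (V × ℤ × V)) (k : ℕ) (x : ℕ → V) (w : ℕ → ℤ) : Prop :=
  ∀ i < k, (x i, w i, x (i + 1)) ∈ E

def NonnegCycles (E : Set (V × ℤ × V)) : Prop :=
  ∀ m x w, IsWalk E m x w → x m = x 0 → 0 ≤ ∑ i ∈ range m, w i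

theorem nonnegCycles_of_satMP (h : SatMP E) : NonnegCycles E := by
  intro m x w hw hx
  rcases m.eq_zero_or_pos with rfl | hm
  · simp
  refine sum_range_nonneg_of_meanPayoffSeq_mod hm
    (h (fun i => (x (i % m), w (i % m), x (i % m + 1))) ⟨fun i => hw _ (Nat.mod_lt i hm), ?_⟩)
  intro i
  change x (i % m + 1) = x ((i + 1) % m)
  rw [← Nat.mod_add_mod]
  rcases (show i % m + 1 ≤ m from Nat.mod_lt i hm).lt_or_eq with hlt | heq
  · rw [Nat.mod_eq_of_lt hlt]
  · rw [heq, Nat.mod_self, hx]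

theorem IsWalk.snoc {k : ℕ} {x : ℕ → V} {w : ℕ → ℤ} (h : IsWalk E k x w) {a : ℤ} {y : V}
    (he : (x k, a, y) ∈ E) :
    IsWalk E (k + 1) (Function.update x (k + 1) y) (Function.update w k a) := by
  intro i hi
  rcases (Nat.lt_succ_iff.1 hi).lt_or_eq with hi | rfl
  · simpa [Function.update_of_ne hi.ne, Function.update_of_ne (Nat.succ_lt_succ hi).ne,
      Function.update_of_ne (Nat.lt_succ_of_lt hi).ne] using h i hi
  · simpa using he

def skipIdx (i d t : ℕ) : ℕ := if t < i then t else t + d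

theorem sum_range_eq_skipIdx_add {M : Type*} [AddCommMonoid M] (f : ℕ → M) (i d r : ℕ) :
    ∑ t ∈ range (i + d + r), f t =
      ∑ t ∈ range (i + r), f (skipIdx i d t) + ∑ t ∈ range d, f (i + t) := by
  have hlow : ∑ t ∈ range i, f (skipIdx i d t) = ∑ t ∈ range i, f t :=
    sum_congr rfl fun t ht => by rw [skipIdx, if_pos (mem_range.1 ht)]
  have hhigh : ∀ t, f (skipIdx i d (i + t)) = f (i + d + t) := fun t => by
    rw [skipIdx, if_neg (by omega)]; ring_nf
  simp only [sum_range_add, hlow, hhigh]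
  abel

theorem IsWalk.skip {i d r : ℕ} {x : ℕ → V} {w : ℕ → ℤ} (h : IsWalk E (i + d + r) x w)
    (hx : x (i + d) = x i) :
    IsWalk E (i + r) (fun t => x (skipIdx i d t)) (fun t => w (skipIdx i d t)) := by
  intro t ht
  simp only [skipIdx]
  by_cases hti : t < i
  · rw [if_pos hti]
    rcases (show t + 1 ≤ i by omega).lt_or_eq with h' | h'
    · rw [if_pos h']; exact h t (by omega)
    · rw [if_neg h'.not_lt, h', hx, ← h']; exact h t (by omega)
  · rw [if_neg hti, if_neg (by omega), show t + 1 + d = t + d + 1 by ring]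
    exact h _ (by omega)

theorem IsWalk.segment {i d r : ℕ} {x : ℕ → V} {w : ℕ → ℤ} (h : IsWalk E (i + d + r) x w) :
    IsWalk E d (fun t => x (i + t)) (fun t => w (i + t)) :=
  fun t ht => h (i + t) (by omega)

theorem exists_lt_le_eq_of_card_le [Fintype V] {k : ℕ} {x : ℕ → V} (hk : Fintype.card V ≤ k) :
    ∃ i j, i < j ∧ j ≤ k ∧ x i = x j := by
  obtain ⟨i, hi, j, hj, hne, hx⟩ := exists_ne_map_eq_of_card_lt_of_maps_to (t := univ)
    (s := range (k + 1)) (by simpa using Nat.lt_succ_of_le hk) (f := x) fun _ _ => mem_univ _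
  simp only [mem_range] at hi hj
  rcases hne.lt_or_gt with h | h
  · exact ⟨i, j, h, by omega, hx⟩
  · exact ⟨j, i, h, by omega, hx.symm⟩

theorem NonnegCycles.neg_mul_le_sum [Fintype V] (hcyc : NonnegCycles E) {c : ℕ}
    (hE : ∀ e ∈ E, -(c : ℤ) ≤ e.2.1) {k : ℕ} {x : ℕ → V} {w : ℕ → ℤ} (h : IsWalk E k x w) :
    -(((Fintype.card V - 1) * c : ℕ) : ℤ) ≤ ∑ i ∈ range k, w i := by
  induction k using Nat.strong_induction_on generalizing x w with
  | _ k ih =>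
  by_cases hk : k < Fintype.card V
  · calc -(((Fintype.card V - 1) * c : ℕ) : ℤ) ≤ ∑ _i ∈ range k, -(c : ℤ) := by
          simp only [sum_const, card_range, nsmul_eq_mul, mul_neg, neg_le_neg_iff]
          exact_mod_cast Nat.mul_le_mul_right c (by omega)
      _ ≤ ∑ i ∈ range k, w i := sum_le_sum fun i hi => hE _ (h i (mem_range.1 hi))
  · obtain ⟨i, j, hij, hjk, hx⟩ := exists_lt_le_eq_of_card_le (x := x) (not_lt.1 hk)
    obtain ⟨d, rfl⟩ := Nat.exists_eq_add_of_le hij.le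
    obtain ⟨r, rfl⟩ := Nat.exists_eq_add_of_le hjk
    have hcycle := hcyc _ _ _ h.segment (by simpa using hx.symm)
    rw [sum_range_eq_skipIdx_add]
    have := ih (i + r) (by omega) (h.skip hx.symm)
    linarith

theorem NonnegCycles.exists_potential [Fintype V] (hcyc : NonnegCycles E) {c : ℕ}
    (hE : ∀ e ∈ E, -(c : ℤ) ≤ e.2.1) :
    ∃ d : V → ℤ, (∀ e ∈ E, d e.2.2 ≤ d e.1 + e.2.1) ∧
      ∀ v, -(((Fintype.card V - 1) * c : ℕ) : ℤ) ≤ d v ∧ d v ≤ 0 := by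
  let S : V → Set ℤ := fun v => {s | ∃ k x w, IsWalk E k x w ∧ x k = v ∧ ∑ i ∈ range k, w i = s}
  have hzero : ∀ v, 0 ∈ S v := fun v =>
    ⟨0, fun _ => v, fun _ => 0, fun _ hi => absurd hi (Nat.not_lt_zero _), rfl, rfl⟩
  have hlow : ∀ v, -(((Fintype.card V - 1) * c : ℕ) : ℤ) ∈ lowerBounds (S v) := by
    rintro v _ ⟨k, x, w, hw, -, rfl⟩
    exact hcyc.neg_mul_le_sum hE hw
  have hmem : ∀ v, sInf (S v) ∈ S v := fun v => Int.csInf_mem ⟨0, hzero v⟩ ⟨_, hlow v⟩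
  refine ⟨fun v => sInf (S v), fun e he => ?_,
    fun v => ⟨hlow v (hmem v), csInf_le ⟨_, hlow v⟩ (hzero v)⟩⟩
  obtain ⟨k, x, w, hw, hxk, hsum⟩ := hmem e.1
  have hext := hw.snoc (a := e.2.1) (y := e.2.2) (by rw [hxk]; exact he)
  show sInf (S e.2.2) ≤ sInf (S e.1) + e.2.1
  refine csInf_le ⟨_, hlow _⟩ ⟨k + 1, _, _, hext, by simp, ?_⟩
  rw [sum_range_succ, sum_update_of_notMem (by simp), Function.update_self, hsum]

end Walks

theorem exists_isHom_digitZeroSet {n N b : ℕ} (hb : 0 < b) (hbase : n * N = b ^ n)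
    (G : WGraph (Wball N)) (hG : Fintype.card G.V ≤ n) (hmp : SatMP G.E) :
    ∃ φ : G.V → ℤ, IsHom G.E (LinE (Wball N) (digitZeroSet n N b)) φ := by
  have hE : ∀ e ∈ G.E, -((N - 1 : ℕ) : ℤ) ≤ e.2.1 := fun e he => by
    have := mem_Ioo.1 (G.wt e he)
    omega
  obtain ⟨d, hd, hdB⟩ := (nonnegCycles_of_satMP hmp).exists_potential hE
  set B := (Fintype.card G.V - 1) * (N - 1)
  set q : G.V → ℕ := fun v => (d v + B).toNat
  have hq : ∀ v, (q v : ℤ) = d v + B ∧ q v ≤ B := fun v =>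
    ⟨Int.toNat_of_nonneg (by linarith [hdB v]), Int.toNat_le.2 (by linarith [hdB v])⟩
  have hB : B ≤ b ^ n := hbase ▸ Nat.mul_le_mul (by omega) (Nat.sub_le _ _)
  obtain ⟨c, hc, hdig⟩ := exists_add_hasZeroDigit hb n (univ.image q) (card_image_le.trans hG)
  have hmem : ∀ v, ((q v + c : ℕ) : ℤ) ∈ digitZeroSet n N b := fun v => by
    rw [digitZeroSet_eq]
    refine ⟨_, ⟨?_, hdig _ (mem_image_of_mem _ (mem_univ v))⟩, rfl⟩
    have := (hq v).2
    rw [mul_assoc, hbase]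
    omega
  refine ⟨fun v => (q v + c : ℕ), fun e he => ⟨hmem _, hmem _, G.wt e he, ?_⟩⟩
  have := hd e he
  push_cast
  rw [(hq _).1, (hq _).1]
  linarith

theorem digitZeroSet_universal_general (n N b : ℕ) (hb : 2 ≤ b)
    (hbase : n * N = b ^ n) :
    Universal n (Wball N) (LinE (Wball N) (digitZeroSet n N b)) ∧
    (digitZeroSet n N b).ncard = 2 * (b ^ n - (b - 1) ^ n) ∧
    (digitZeroSet n N b).ncard ≤ 2 * n * b ^ (n - 1) := by
  have hcard : (digitZeroSet n N b).ncard = 2 * (b ^ n - (b - 1) ^ n) := by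
    rw [ncard_digitZeroSet, mul_assoc, hbase, count_hasZeroDigit_two_mul_pow]
  refine ⟨⟨satMP_linE ⟨0, fun a ha => ha.1⟩ ⟨_, fun a ha => ha.2.1.le⟩,
    fun G hG hmp => exists_isHom_digitZeroSet (by omega) hbase G hG hmp⟩, hcard, ?_⟩
  rw [hcard, mul_assoc]
  exact Nat.mul_le_mul_left 2 (pow_sub_pred_pow_le b n)

/-- for `n, N ≥ 1` and `b ≥ 2` with `nN = b^n`, the
`(-N,N)`-linear graph on `digitZeroSet n N b` is `(n, (-N,N))`-universal, and its
number of vertices is `2 (b^n - (b-1)^n)`, which is at most `2 n b^(n-1)`. -/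
theorem digitZeroSet_universal (n N b : ℕ) (hn : 1 ≤ n) (hN : 1 ≤ N) (hb : 2 ≤ b)
    (hbase : n * N = b ^ n) :
    Universal n (Wball N) (LinE (Wball N) (digitZeroSet n N b)) ∧
    (digitZeroSet n N b).ncard = 2 * (b ^ n - (b - 1) ^ n) ∧
    (digitZeroSet n N b).ncard ≤ 2 * n * b ^ (n - 1) :=
  digitZeroSet_universal_general n N b hb hbase
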